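/- arXiv:1401.7183 — 3 statements merged into one kernel-verified Lean document; each statement's English description precedes it below -/
import Mathlib

section
/- Let i ≥ 5 be an integer. Then ᾱ({1, 5, 2i}) = i/(2i+5). -/
/-!
The `(2i+5)`-periodic set of integers with residues `0, 2, …, 2i-2` is independent and has
density `i/(2i+5)`. Conversely, `2i+5` consecutive integers contain at most `i` points of an
independent set, which bounds every density by `i/(2i+5)`. Indeed, for points
`x 0 < ⋯ < x i` of the set in such a window the gaps are at least `2`, so the excess
`x j - x 0 - 2j` grows from `0` to at most `4`. The forbidden distance `5` lets the excess reach
exactly `1` only at `j = 1` (symmetrically, `x i - x j` exceeds `2(i-j)` by exactly `1` only for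
`j = i - 1`), and the forbidden distance `2i` between `x 0`, `x 1`, `x (i-2)`, `x (i-1)`, `x i`
then excludes every value of the final excess.
-/

open Filter

/-- The upper density of a set of integers. -/
noncomputable def density (A : Set ℤ) : ℝ :=
  Filter.limsup
    (fun N : ℕ => ((A ∩ Set.Icc (-(N : ℤ)) (N : ℤ)).ncard : ℝ) / (2 * (N : ℝ) + 1))
    Filter.atTop

/-- A set of integers is independent in the distance graph `G(S)` if no two distinct
elements differ by an element of `S`. -/
def IsIndepSet (S : Finset ℕ) (A : Set ℤ) : Prop :=
  ∀ a ∈ A, ∀ b ∈ A, a ≠ b → (a - b).natAbs ∉ S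

/-- The independence ratio of the distance graph `G(S)`. -/
noncomputable def indRatio (S : Finset ℕ) : ℝ :=
  sSup (density '' {A : Set ℤ | IsIndepSet S A})

open Topology

section Density

variable {A : Set ℤ} {m c : ℕ}

theorem ncard_inter_Ico_add (t : ℤ) (a b : ℕ) :
    (A ∩ Set.Ico t (t + (a + b : ℕ))).ncard =
      (A ∩ Set.Ico t (t + a)).ncard + (A ∩ Set.Ico (t + a) (t + a + b)).ncard := by
  rw [← Set.ncard_union_eq, ← Set.inter_union_distrib_left, Set.Ico_union_Ico_eq_Ico (by omega)
    (by omega), Nat.cast_add, add_assoc]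
  exact Set.disjoint_of_subset Set.inter_subset_right Set.inter_subset_right
    Set.Ico_disjoint_Ico_same

theorem mul_ncard_inter_Ico_le (hm : 0 < m) (h : ∀ t : ℤ, (A ∩ Set.Ico t (t + m)).ncard ≤ c)
    (t : ℤ) (L : ℕ) : m * (A ∩ Set.Ico t (t + L)).ncard ≤ (L + m) * c := by
  induction L using Nat.strong_induction_on generalizing t with
  | _ L ih =>
    rcases lt_or_ge L m with hL | hL
    · have := (Set.ncard_le_ncard (Set.inter_subset_inter_right A
        (Set.Ico_subset_Ico_right (by omega : t + L ≤ t + m)))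
        ((Set.finite_Ico _ _).inter_of_right A)).trans (h t)
      nlinarith
    · obtain ⟨L, rfl⟩ := Nat.exists_eq_add_of_le hL
      have := ih L (by omega) (t + m)
      have := h t
      rw [ncard_inter_Ico_add]
      nlinarith

theorem le_mul_ncard_inter_Ico (hm : 0 < m) (h : ∀ t : ℤ, c ≤ (A ∩ Set.Ico t (t + m)).ncard)
    (t : ℤ) (L : ℕ) : L * c ≤ m * ((A ∩ Set.Ico t (t + L)).ncard + c) := by
  induction L using Nat.strong_induction_on generalizing t with
  | _ L ih =>
    rcases lt_or_ge L m with hL | hL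
    · nlinarith
    · obtain ⟨L, rfl⟩ := Nat.exists_eq_add_of_le hL
      have := ih L (by omega) (t + m)
      have := h t
      rw [ncard_inter_Ico_add]
      nlinarith

theorem Icc_neg_eq_Ico (N : ℕ) :
    Set.Icc (-(N : ℤ)) N = Set.Ico (-(N : ℤ)) (-(N : ℤ) + (2 * N + 1 : ℕ)) := by
  ext; simp only [Set.mem_Icc, Set.mem_Ico]; omega

theorem ncard_inter_Icc_div_le (hm : 0 < m) (h : ∀ t : ℤ, (A ∩ Set.Ico t (t + m)).ncard ≤ c)
    (N : ℕ) :
    ((A ∩ Set.Icc (-(N : ℤ)) N).ncard : ℝ) / (2 * N + 1) ≤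
      c / m + c / (2 * N + 1) := by
  have key := mul_ncard_inter_Ico_le hm h (-N) (2 * N + 1)
  rw [← Icc_neg_eq_Ico] at key
  have key' : (m : ℝ) * (A ∩ Set.Icc (-(N : ℤ)) N).ncard ≤ (2 * N + 1 + m) * c := by
    exact_mod_cast key
  rw [div_add_div _ _ (by positivity) (by positivity), div_le_div_iff₀ (by positivity)
    (by positivity)]
  nlinarith

theorem le_ncard_inter_Icc_div (hm : 0 < m) (h : ∀ t : ℤ, c ≤ (A ∩ Set.Ico t (t + m)).ncard)
    (N : ℕ) :
    (c : ℝ) / m - c / (2 * N + 1) ≤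
      ((A ∩ Set.Icc (-(N : ℤ)) N).ncard : ℝ) / (2 * N + 1) := by
  have key := le_mul_ncard_inter_Ico hm h (-N) (2 * N + 1)
  rw [← Icc_neg_eq_Ico] at key
  have key' : (2 * N + 1 : ℝ) * c ≤ m * ((A ∩ Set.Icc (-(N : ℤ)) N).ncard + c) := by
    exact_mod_cast key
  rw [div_sub_div _ _ (by positivity) (by positivity), div_le_div_iff₀ (by positivity)
    (by positivity)]
  nlinarith

theorem tendsto_const_add_div_two_mul_add_one (a C : ℝ) :
    Tendsto (fun N : ℕ => a + C / (2 * N + 1)) atTop (𝓝 a) := by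
  have hden : Tendsto (fun N : ℕ => 2 * (N : ℝ) + 1) atTop atTop :=
    tendsto_atTop_add_const_right _ _ <| tendsto_natCast_atTop_atTop.const_mul_atTop two_pos
  simpa using (tendsto_const_nhds.div_atTop hden).const_add a

theorem density_le_of_ncard_inter_Ico_le (hm : 0 < m)
    (h : ∀ t : ℤ, (A ∩ Set.Ico t (t + m)).ncard ≤ c) : density A ≤ c / m := by
  have hlim := tendsto_const_add_div_two_mul_add_one (c / m) c
  rw [density, ← hlim.limsup_eq]
  exact limsup_le_limsup (Eventually.of_forall (ncard_inter_Icc_div_le hm h))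
    (isCoboundedUnder_le_of_le atTop fun N => by positivity) hlim.isBoundedUnder_le

theorem density_eq_of_ncard_inter_Ico_eq (hm : 0 < m)
    (h : ∀ t : ℤ, (A ∩ Set.Ico t (t + m)).ncard = c) : density A = c / m := by
  have hlow := tendsto_const_add_div_two_mul_add_one (c / m) (-c)
  simp only [neg_div, ← sub_eq_add_neg] at hlow
  exact (tendsto_of_tendsto_of_tendsto_of_le_of_le hlow
    (tendsto_const_add_div_two_mul_add_one (c / m) c)
    (le_ncard_inter_Icc_div hm fun t => (h t).ge)
    (ncard_inter_Icc_div_le hm fun t => (h t).le)).limsup_eq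

end Density

theorem ncard_emod_mem_inter_Ico {m : ℕ} {R : Finset ℤ} (hR : ∀ r ∈ R, 0 ≤ r ∧ r < m)
    (t : ℤ) : ({x : ℤ | x % m ∈ R} ∩ Set.Ico t (t + m)).ncard = R.card := by
  classical
  have hinj : Set.InjOn (· % (m : ℤ)) (Finset.Ico t (t + m)) := by
    rw [← Finset.card_image_iff, Int.image_Ico_emod _ _ (by positivity)]
    simp
  have hset : {x : ℤ | x % m ∈ R} ∩ Set.Ico t (t + m) =
      ↑((Finset.Ico t (t + m)).filter (· % (m : ℤ) ∈ R)) := by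
    ext; simp [and_comm]
  rw [hset, Set.ncard_coe_finset,
    ← Finset.card_image_of_injOn (hinj.mono (Finset.coe_subset.2 (Finset.filter_subset _ _))),
    ← Finset.filter_image (p := (· ∈ R)), Int.image_Ico_emod _ _ (by positivity)]
  congr 1
  ext r
  simp only [Finset.mem_filter, Finset.mem_Ico, and_iff_right_iff_imp]
  exact hR r

theorem IsIndepSet.sub_ne {S : Finset ℕ} {A : Set ℤ} (hA : IsIndepSet S A) {a b : ℤ}
    (ha : a ∈ A) (hb : b ∈ A) (hab : b < a) {n : ℕ} (hn : n ∈ S) : a - b ≠ n := fun h =>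
  hA a ha b hb hab.ne' (by rwa [h, Int.natAbs_natCast])

/-- Sorted points `x 0 < ⋯ < x i` of an independent set of `G({1, 5, 2i})`. -/
structure IsIndepChain (i : ℕ) (x : ℕ → ℤ) : Prop where
  two_le_sub_succ : ∀ j < i, 2 ≤ x (j + 1) - x j
  sub_ne_five : ∀ j k, j < k → k ≤ i → x k - x j ≠ 5
  sub_ne_two_mul : ∀ j k, j < k → k ≤ i → x k - x j ≠ 2 * i

namespace IsIndepChain

variable {i : ℕ} {x : ℕ → ℤ}

theorem two_mul_le_sub (h : IsIndepChain i x) {j k : ℕ} (hjk : j ≤ k) (hk : k ≤ i) :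
    2 * ((k : ℤ) - j) ≤ x k - x j := by
  induction k, hjk using Nat.le_induction with
  | base => simp
  | succ k hjk ih =>
    have := h.two_le_sub_succ k (by omega)
    have := ih (by omega)
    push_cast
    linarith

theorem reflect (h : IsIndepChain i x) : IsIndepChain i (fun j => -x (i - j)) where
  two_le_sub_succ j hj := by
    have := h.two_le_sub_succ (i - (j + 1)) (by omega)
    rw [show i - (j + 1) + 1 = i - j by omega] at this
    linarith
  sub_ne_five j k hjk hk := by
    have := h.sub_ne_five (i - k) (i - j) (by omega) (by omega)
    grind
  sub_ne_two_mul j k hjk hk := by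
    have := h.sub_ne_two_mul (i - k) (i - j) (by omega) (by omega)
    grind

theorem sub_zero_ne_two_mul_add_one (h : IsIndepChain i x) {j : ℕ} (hj : j ≤ i)
    (hj₁ : j ≠ 1) : x j - x 0 ≠ 2 * j + 1 := by
  induction j using Nat.strong_induction_on with
  | _ j ih =>
    intro hx
    obtain _ | _ | j := j
    · simp at hx
    · exact hj₁ rfl
    have h₀ := h.two_mul_le_sub (Nat.zero_le j) (by omega)
    have h₂ := h.two_mul_le_sub (show j ≤ j + 1 + 1 by omega) hj
    have h₅ := h.sub_ne_five j (j + 1 + 1) (by omega) hj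
    obtain rfl | hj₁ := eq_or_ne j 1
    · simp only [Nat.reduceAdd] at *
      have h₁₂ := h.two_mul_le_sub (show 1 ≤ 2 by omega) (by omega)
      have h₂₃ := h.two_mul_le_sub (show 2 ≤ 3 by omega) (by omega)
      have h₀₂ := h.sub_ne_five 0 2 (by omega) (by omega)
      push_cast at *
      omega
    · have := ih j (by omega) (by omega) hj₁
      push_cast at *
      omega

theorem sub_ne_two_mul_sub_add_one (h : IsIndepChain i x) {j : ℕ} (hj : j ≤ i)
    (hji : j + 1 ≠ i) : x i - x j ≠ 2 * ((i : ℤ) - j) + 1 := by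
  intro hx
  apply h.reflect.sub_zero_ne_two_mul_add_one (j := i - j) (by omega) (by omega)
  simp only [Nat.sub_sub_self hj, Nat.sub_zero]
  push_cast [hj]
  linarith

theorem first_gap_ne_three (h : IsIndepChain i x) (hi : 5 ≤ i)
    (hspan : x i - x 0 = 2 * i + 4) : x 1 - x 0 ≠ 3 := by
  intro h₁
  -- `x 2 - x 0` is forced to be `6`, and then `x 3 - x 0` has no admissible value.
  have hfar : ∀ j ≤ i - 2, x j - x 0 ≠ 2 * j + 4 := fun j hj hxj => by
    have := h.two_mul_le_sub hj (by omega)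
    have := h.two_mul_le_sub (show i - 2 ≤ i by omega) le_rfl
    exact h.sub_ne_two_mul 0 (i - 2) (by omega) (by omega) (by omega)
  have h₂ := h.two_mul_le_sub (show 1 ≤ 2 by omega) (by omega)
  have h₃ := h.two_mul_le_sub (show 2 ≤ 3 by omega) (by omega)
  have h₃i := h.two_mul_le_sub (show 3 ≤ i by omega) le_rfl
  have hlow₂ := h.sub_zero_ne_two_mul_add_one (j := 2) (by omega) (by omega)
  have hhigh₂ := h.sub_ne_two_mul_sub_add_one (j := 2) (by omega) (by omega)
  have hhigh₃ := h.sub_ne_two_mul_sub_add_one (j := 3) (by omega) (by omega)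
  have h₁₃ := h.sub_ne_five 1 3 (by omega) (by omega)
  have hfar₂ := hfar 2 (by omega)
  have hfar₃ := hfar 3 (by omega)
  push_cast at *
  omega

theorem first_gap_eq_two (h : IsIndepChain i x) (hi : 5 ≤ i)
    (hspan₃ : 2 * i + 3 ≤ x i - x 0) (hspan₄ : x i - x 0 ≤ 2 * i + 4) : x 1 - x 0 = 2 := by
  have h₁ := h.two_le_sub_succ 0 (by omega)
  have h₁₂ := h.two_mul_le_sub (show 1 ≤ i - 2 by omega) (by omega)
  have h₂i := h.two_mul_le_sub (show i - 2 ≤ i by omega) le_rfl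
  have hthree := h.first_gap_ne_three hi
  have hhigh₁ := h.sub_ne_two_mul_sub_add_one (j := 1) (by omega) (by omega)
  have h₀₁ := h.sub_ne_five 0 1 (by omega) (by omega)
  have h₁i := h.sub_ne_two_mul 1 i (by omega) le_rfl
  have h₀i₂ := h.sub_ne_two_mul 0 (i - 2) (by omega) (by omega)
  push_cast at *
  omega

theorem span_ne_two_mul_add_three (h : IsIndepChain i x) (hi : 5 ≤ i) :
    x i - x 0 ≠ 2 * i + 3 := by
  intro hspan
  -- The excess stays `0` up to `i - 1`, so the last gap would be `5`.
  have hflat : ∀ j, 1 ≤ j → j ≤ i - 1 → x j - x 0 = 2 * j := by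
    intro j hj₁ hj
    induction j, hj₁ using Nat.le_induction with
    | base => simpa using h.first_gap_eq_two hi (by omega) (by omega)
    | succ j hj₁ ih =>
      have hstep := h.two_le_sub_succ j (by omega)
      have hrest := h.two_mul_le_sub (show j + 1 ≤ i by omega) le_rfl
      have h₅ := h.sub_ne_five j (j + 1) (by omega) (by omega)
      have hlow := h.sub_zero_ne_two_mul_add_one (j := j + 1) (by omega) (by omega)
      have h₀ := h.sub_ne_two_mul 0 (j + 1) (by omega) (by omega)
      have hhigh : j + 2 ≠ i → x i - x (j + 1) ≠ 2 * ((i : ℤ) - (j + 1 : ℕ)) + 1 :=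
        h.sub_ne_two_mul_sub_add_one (by omega)
      have := ih (by omega)
      push_cast at *
      omega
  have := hflat (i - 1) (by omega) le_rfl
  have := h.sub_ne_five (i - 1) i (by omega) le_rfl
  push_cast [show 1 ≤ i by omega] at *
  omega

theorem span_ne_two_mul_add_four (h : IsIndepChain i x) (hi : 5 ≤ i) :
    x i - x 0 ≠ 2 * i + 4 := by
  intro hspan
  have hfirst := h.first_gap_eq_two hi (by omega) (by omega)
  have hlast := h.reflect.first_gap_eq_two hi
    (by simp only [Nat.sub_self, Nat.sub_zero]; omega)
    (by simp only [Nat.sub_self, Nat.sub_zero]; omega)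
  have := h.sub_ne_two_mul 1 (i - 1) (by omega) (by omega)
  simp only [Nat.sub_zero] at hlast
  omega

theorem two_mul_add_five_le_span (h : IsIndepChain i x) (hi : 5 ≤ i) :
    2 * i + 5 ≤ x i - x 0 := by
  by_contra! hspan
  have h₁ := h.two_le_sub_succ 0 (by omega)
  have h₁i := h.two_mul_le_sub (show 1 ≤ i - 1 by omega) (by omega)
  have hi₁ := h.two_mul_le_sub (show i - 1 ≤ i by omega) le_rfl
  have hlow := h.sub_zero_ne_two_mul_add_one (j := i) le_rfl (by omega)
  have hhigh₁ := h.sub_ne_two_mul_sub_add_one (j := 1) (by omega) (by omega)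
  have h₀i := h.sub_ne_two_mul 0 i (by omega) le_rfl
  have h₀i₁ := h.sub_ne_two_mul 0 (i - 1) (by omega) (by omega)
  have h₁i' := h.sub_ne_two_mul 1 i (by omega) le_rfl
  have h₃ := h.span_ne_two_mul_add_three hi
  have h₄ := h.span_ne_two_mul_add_four hi
  push_cast at *
  omega

end IsIndepChain

theorem IsIndepSet.ncard_inter_Ico_le {i : ℕ} (hi : 5 ≤ i) {A : Set ℤ}
    (hA : IsIndepSet {1, 5, 2 * i} A) (t : ℤ) :
    (A ∩ Set.Ico t (t + (2 * i + 5 : ℕ))).ncard ≤ i := by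
  by_contra! hcard
  set B := A ∩ Set.Ico t (t + (2 * i + 5 : ℕ))
  have hB : B.Finite := (Set.finite_Ico _ _).inter_of_right A
  obtain ⟨s, hsB, hs⟩ := Finset.exists_subset_card_eq
    (show i + 1 ≤ hB.toFinset.card by rw [← Set.ncard_eq_toFinset_card _ hB]; omega)
  let x : ℕ → ℤ := fun j => s.orderEmbOfFin hs ⟨min j i, by omega⟩
  have hxB (j : ℕ) : x j ∈ B := by simpa using hsB (s.orderEmbOfFin_mem hs _)
  have hx_lt {j k : ℕ} (hjk : j < k) (hk : k ≤ i) : x j < x k :=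
    (s.orderEmbOfFin hs).strictMono (by simp [Fin.lt_def]; omega)
  have hx_sub {j k n : ℕ} (hjk : j < k) (hk : k ≤ i)
      (hn : n ∈ ({1, 5, 2 * i} : Finset ℕ)) : x k - x j ≠ n :=
    hA.sub_ne (hxB k).1 (hxB j).1 (hx_lt hjk hk) hn
  have hchain : IsIndepChain i x := by
    refine ⟨fun j hj => ?_, fun j k hjk hk => ?_, fun j k hjk hk => ?_⟩
    · have := hx_lt (Nat.lt_add_one j) hj
      have := hx_sub (Nat.lt_add_one j) hj (n := 1) (by simp)
      omega
    · simpa using hx_sub hjk hk (n := 5) (by simp)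
    · simpa using hx_sub hjk hk (n := 2 * i) (by simp)
  have := hchain.two_mul_add_five_le_span hi
  have := (hxB i).2
  have := (hxB 0).2
  simp only [Set.mem_Ico] at *
  push_cast at *
  omega

def evenResidueSet (i : ℕ) : Set ℤ :=
  {x | x % (2 * i + 5 : ℕ) ∈ (Finset.range i).image fun r : ℕ => 2 * (r : ℤ)}

theorem ncard_evenResidueSet_inter_Ico (i : ℕ) (t : ℤ) :
    (evenResidueSet i ∩ Set.Ico t (t + (2 * i + 5 : ℕ))).ncard = i := by
  rw [evenResidueSet, ncard_emod_mem_inter_Ico, Finset.card_image_of_injective _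
    (fun r s h => by simpa using h), Finset.card_range]
  simp only [Finset.mem_image, Finset.mem_range]
  rintro _ ⟨r, hr, rfl⟩
  omega

theorem isIndepSet_evenResidueSet (i : ℕ) : IsIndepSet {1, 5, 2 * i} (evenResidueSet i) := by
  intro a ha b hb _ hab
  simp only [evenResidueSet, Set.mem_ofPred_eq, Finset.mem_image, Finset.mem_range] at ha hb
  obtain ⟨r, hr, har⟩ := ha
  obtain ⟨s, hs, hbs⟩ := hb
  set m : ℤ := ((2 * i + 5 : ℕ) : ℤ)
  have hm : m = 2 * i + 5 := by push_cast [m]; rfl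
  have ha := Int.emod_add_mul_ediv a m
  have hb := Int.emod_add_mul_ediv b m
  have hsub : a - b = m * (a / m - b / m) + 2 * r - 2 * s := by rw [mul_sub]; linarith
  generalize a / m - b / m = K at hsub
  -- `|2 r - 2 s| < 2 i`: for `K = 0` the difference is even and below `2 i`, for `K = ±1` it is
  -- odd and above `5`, and for `|K| ≥ 2` it exceeds `2 i`.
  have hm_pos : 0 < m := by omega
  have hneg : K ≤ -2 → m * K ≤ -2 * m := fun hK => by nlinarith
  have hpos : 2 ≤ K → 2 * m ≤ m * K := fun hK => by nlinarith
  simp only [Finset.mem_insert, Finset.mem_singleton] at hab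
  obtain hK | rfl | rfl | rfl | hK : K ≤ -2 ∨ K = -1 ∨ K = 0 ∨ K = 1 ∨ 2 ≤ K := by omega
  all_goals omega

/-- For `i ≥ 5`, `ᾱ({1, 5, 2i}) = i/(2i+5)`. -/
theorem indRatio_one_five_even (i : ℕ) (hi : 5 ≤ i) :
    indRatio ({1, 5, 2 * i} : Finset ℕ) = (i : ℝ) / (2 * (i : ℝ) + 5) := by
  have hm : 0 < 2 * i + 5 := by omega
  refine IsGreatest.csSup_eq ⟨⟨evenResidueSet i, isIndepSet_evenResidueSet i, ?_⟩, ?_⟩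
  · simpa using density_eq_of_ncard_inter_Ico_eq hm (ncard_evenResidueSet_inter_Ico i)
  · rintro _ ⟨A, hA, rfl⟩
    simpa using density_le_of_ncard_inter_Ico_le hm (hA.ncard_inter_Ico_le hi)
end

section
/- Let k and ℓ be integers with 1 ≤ ℓ ≤ k. Then ᾱ({1, 2k, 2k+2ℓ}) ≥ 2k/(4k+2ℓ). -/
open Filter

open Topology

/-!
A set of integers determined by a set `R ⊆ [0, m)` of residues modulo `m` has density at least
`|R| / m`, and it is independent in `G(S)` as soon as no difference of two residues in `R` is
congruent modulo `m` to an element of `S`. For `S = {1, 2k, 2k+2ℓ}` and `m = 4k + 2ℓ` take the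
`k` even residues `0, 2, …, 2k-2` and the `k` odd residues `2k+2ℓ-1, …, 4k+2ℓ-3`: differences
inside a block are even and of absolute value below `2k`, differences across the blocks are odd
and of absolute value between `2ℓ+1` and `4k+2ℓ-3`, so none of them is `≡ 1, 2k, 2k+2ℓ`.
-/

lemma ncard_inter_Icc_div_le_one (A : Set ℤ) (N : ℕ) :
    ((A ∩ Set.Icc (-(N : ℤ)) N).ncard : ℝ) / (2 * N + 1) ≤ 1 := by
  have hle : (A ∩ Set.Icc (-(N : ℤ)) N).ncard ≤ 2 * N + 1 := by
    calc (A ∩ Set.Icc (-(N : ℤ)) N).ncard ≤ (Set.Icc (-(N : ℤ)) N).ncard :=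
          Set.ncard_le_ncard Set.inter_subset_right (Set.finite_Icc _ _)
      _ = 2 * N + 1 := by rw [← Finset.coe_Icc, Set.ncard_coe_finset, Int.card_Icc]; omega
  rw [div_le_one (by positivity)]
  exact_mod_cast hle

lemma density_le_one (A : Set ℤ) : density A ≤ 1 :=
  limsup_le_of_le (isCoboundedUnder_le_of_le atTop fun _ => by positivity)
    (Eventually.of_forall (ncard_inter_Icc_div_le_one A))

lemma density_le_indRatio {S : Finset ℕ} {A : Set ℤ} (hA : IsIndepSet S A) :
    density A ≤ indRatio S :=
  le_csSup ⟨1, by rintro _ ⟨B, -, rfl⟩; exact density_le_one B⟩ ⟨A, hA, rfl⟩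

def residueSet (m : ℕ) (R : Finset ℤ) : Set ℤ :=
  {x | x % m ∈ R}

lemma isIndepSet_residueSet {S : Finset ℕ} {m : ℕ} {R : Finset ℤ}
    (hR : ∀ r ∈ R, ∀ r' ∈ R, ∀ s ∈ S, ¬(s : ℤ) ≡ r - r' [ZMOD m]) :
    IsIndepSet S (residueSet m R) := by
  intro a ha b hb _ hS
  have hab : a - b ≡ a % m - b % m [ZMOD m] :=
    ((Int.mod_modEq a m).sub (Int.mod_modEq b m)).symm
  rcases Int.natAbs_eq (a - b) with h | h
  · exact hR _ ha _ hb _ hS (h ▸ hab)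
  · refine hR _ hb _ ha _ hS ?_
    rw [show ((a - b).natAbs : ℤ) = -(a - b) by omega, ← neg_sub (a % m)]
    exact hab.neg

lemma two_mul_div_mul_card_le_ncard_residueSet {m : ℕ} {R : Finset ℤ}
    (hR : ∀ r ∈ R, 0 ≤ r ∧ r < m) (N : ℕ) :
    2 * (N / m) * R.card ≤ (residueSet m R ∩ Set.Icc (-(N : ℤ)) N).ncard := by
  have hqN : ((N / m : ℕ) : ℤ) * m ≤ N := by exact_mod_cast Nat.div_mul_le_self N m
  set q : ℤ := ((N / m : ℕ) : ℤ)
  set blocks := Finset.Ico (-q) q ×ˢ R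
  set f : ℤ × ℤ → ℤ := fun p => p.1 * m + p.2
  have hf_mod : ∀ p ∈ blocks, f p % m = p.2 := by
    intro p hp
    rw [Finset.mem_product] at hp
    obtain ⟨h0, hm⟩ := hR _ hp.2
    rw [show f p = p.2 + p.1 * m by simp only [f]; ring, Int.add_mul_emod_self_right,
      Int.emod_eq_of_lt h0 hm]
  have hinj : Set.InjOn f blocks := by
    intro p hp p' hp' h
    have h2 : p.2 = p'.2 := by rw [← hf_mod p hp, ← hf_mod p' hp', h]
    have hm : (m : ℤ) ≠ 0 := by
      have := hR _ (Finset.mem_product.1 hp).2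
      omega
    have h1 : p.1 = p'.1 := mul_right_cancel₀ hm (by simp only [f] at h; omega)
    exact Prod.ext h1 h2
  have hsub : ↑(blocks.image f) ⊆ residueSet m R ∩ Set.Icc (-(N : ℤ)) N := by
    intro x hx
    rw [Finset.coe_image] at hx
    obtain ⟨p, hp, rfl⟩ := hx
    refine ⟨show f p % m ∈ R by rw [hf_mod p hp]; exact (Finset.mem_product.1 hp).2, ?_⟩
    rw [Finset.mem_coe, Finset.mem_product, Finset.mem_Ico] at hp
    obtain ⟨⟨hlo, hhi⟩, hr⟩ := hp
    obtain ⟨hr0, hrm⟩ := hR _ hr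
    have h1 : -q * m ≤ p.1 * m := mul_le_mul_of_nonneg_right hlo (by positivity)
    have h2 : p.1 * m ≤ (q - 1) * m := mul_le_mul_of_nonneg_right (by omega) (by positivity)
    constructor <;> simp only [f] <;> linarith
  calc 2 * (N / m) * R.card = (blocks.image f).card := by
        rw [Finset.card_image_of_injOn hinj, Finset.card_product, Int.card_Ico]
        congr 1
        omega
    _ ≤ _ := by
      rw [← Set.ncard_coe_finset]
      exact Set.ncard_le_ncard hsub ((Set.finite_Icc _ _).inter_of_right _)

theorem card_div_le_density_residueSet {m : ℕ} (hm : 0 < m) {R : Finset ℤ}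
    (hR : ∀ r ∈ R, 0 ≤ r ∧ r < m) : (R.card : ℝ) / m ≤ density (residueSet m R) := by
  set c : ℝ := (R.card : ℝ)
  -- `[-N, N]` contains `2 (N / m)` full periods, and `(N / m) m > N - m`.
  set g : ℕ → ℝ := fun N => c / m - 2 * c / (2 * N + 1)
  have hg : Tendsto g atTop (𝓝 (c / m)) := by
    have h2N : Tendsto (fun N : ℕ => 2 * (N : ℝ) + 1) atTop atTop :=
      tendsto_atTop_add_const_right _ _ (tendsto_natCast_atTop_atTop.const_mul_atTop two_pos)
    simpa using tendsto_const_nhds.sub (tendsto_const_nhds.div_atTop h2N)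
  have hgF : ∀ N : ℕ,
      g N ≤ ((residueSet m R ∩ Set.Icc (-(N : ℤ)) N).ncard : ℝ) / (2 * N + 1) := by
    intro N
    have hcount : ((2 * (N / m) * R.card : ℕ) : ℝ) ≤
        (residueSet m R ∩ Set.Icc (-(N : ℤ)) N).ncard := by
      exact_mod_cast two_mul_div_mul_card_le_ncard_residueSet hR N
    push_cast at hcount
    have hq : (N : ℝ) + 1 ≤ (N / m : ℕ) * m + m := by exact_mod_cast Nat.lt_div_mul_add hm
    have hc : 0 ≤ c := by positivity
    have hmR : (0 : ℝ) < m := by exact_mod_cast hm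
    refine le_trans ?_ (div_le_div_of_nonneg_right hcount (by positivity))
    simp only [g]
    rw [div_sub_div _ _ hmR.ne' (by positivity), div_le_div_iff₀ (by positivity) (by positivity)]
    nlinarith [mul_le_mul_of_nonneg_left hq hc]
  calc (R.card : ℝ) / m = limsup g atTop := hg.limsup_eq.symm
    _ ≤ density (residueSet m R) :=
      limsup_le_limsup (Eventually.of_forall hgF) hg.isCoboundedUnder_le
        (isBoundedUnder_of ⟨1, ncard_inter_Icc_div_le_one _⟩)

def evenOddResidues (k ℓ : ℕ) : Finset ℤ :=
  (Finset.range k).image (fun i : ℕ => 2 * (i : ℤ)) ∪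
    (Finset.range k).image (fun i : ℕ => 2 * k + 2 * ℓ - 1 + 2 * (i : ℤ))

lemma mem_evenOddResidues {k ℓ : ℕ} {r : ℤ} :
    r ∈ evenOddResidues k ℓ ↔ ∃ i < k, r = 2 * i ∨ r = 2 * k + 2 * ℓ - 1 + 2 * i := by
  simp only [evenOddResidues, Finset.mem_union, Finset.mem_image, Finset.mem_range]
  constructor
  · rintro (⟨i, hi, rfl⟩ | ⟨i, hi, rfl⟩)
    exacts [⟨i, hi, .inl rfl⟩, ⟨i, hi, .inr rfl⟩]
  · rintro ⟨i, hi, rfl | rfl⟩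
    exacts [.inl ⟨i, hi, rfl⟩, .inr ⟨i, hi, rfl⟩]

lemma card_evenOddResidues (k ℓ : ℕ) : (evenOddResidues k ℓ).card = 2 * k := by
  rw [evenOddResidues, Finset.card_union_of_disjoint, Finset.card_image_of_injective,
    Finset.card_image_of_injective, Finset.card_range, two_mul]
  · intro i j h; simp only at h; omega
  · intro i j h; simp only at h; omega
  · simp only [Finset.disjoint_left, Finset.mem_image]
    rintro _ ⟨i, -, rfl⟩ ⟨j, -, h⟩
    omega

lemma evenOddResidues_bounds {k ℓ : ℕ} {r : ℤ} (hr : r ∈ evenOddResidues k ℓ) :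
    0 ≤ r ∧ r < (4 * k + 2 * ℓ : ℕ) := by
  obtain ⟨i, hi, h | h⟩ := mem_evenOddResidues.1 hr <;> push_cast <;> omega

lemma Int.ModEq.eq_or_eq_sub {m s x : ℤ} (hs : 0 ≤ s) (hsm : s < m) (hx : -m < x)
    (hxm : x < m) (h : s ≡ x [ZMOD m]) : x = s ∨ x = s - m := by
  have hxs : x % m = s := by rw [← h, Int.emod_eq_of_lt hs hsm]
  rcases le_or_gt 0 x with hx0 | hx0
  · exact .inl (by rwa [Int.emod_eq_of_lt hx0 hxm] at hxs)
  · right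
    rw [← Int.add_emod_right, Int.emod_eq_of_lt (by omega) (by omega)] at hxs
    omega

lemma not_modEq_sub_evenOddResidues {k ℓ : ℕ} (hℓ : 1 ≤ ℓ) :
    ∀ r ∈ evenOddResidues k ℓ, ∀ r' ∈ evenOddResidues k ℓ,
      ∀ s ∈ ({1, 2 * k, 2 * k + 2 * ℓ} : Finset ℕ),
        ¬(s : ℤ) ≡ r - r' [ZMOD (4 * k + 2 * ℓ : ℕ)] := by
  intro r hr r' hr' s hs hmod
  obtain ⟨i, hi, hri⟩ := mem_evenOddResidues.1 hr
  obtain ⟨j, hj, hrj⟩ := mem_evenOddResidues.1 hr'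
  simp only [Finset.mem_insert, Finset.mem_singleton] at hs
  push_cast at hmod
  have := hmod.eq_or_eq_sub (by omega) (by omega) (by omega) (by omega)
  omega

theorem indRatio_one_even_even_ge_general (k ℓ : ℕ) (hℓ : 1 ≤ ℓ) :
    (2 * (k : ℝ)) / (4 * (k : ℝ) + 2 * (ℓ : ℝ)) ≤
      indRatio ({1, 2 * k, 2 * k + 2 * ℓ} : Finset ℕ) := by
  calc (2 * (k : ℝ)) / (4 * k + 2 * ℓ)
      = ((evenOddResidues k ℓ).card : ℝ) / (4 * k + 2 * ℓ : ℕ) := by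
        rw [card_evenOddResidues]; push_cast; rfl
    _ ≤ density (residueSet (4 * k + 2 * ℓ) (evenOddResidues k ℓ)) :=
        card_div_le_density_residueSet (by omega) fun _ => evenOddResidues_bounds
    _ ≤ _ := density_le_indRatio (isIndepSet_residueSet (not_modEq_sub_evenOddResidues hℓ))

/-- For `1 ≤ ℓ ≤ k`, `ᾱ({1, 2k, 2k+2ℓ}) ≥ 2k/(4k+2ℓ)`. -/
theorem indRatio_one_even_even_ge (k ℓ : ℕ) (hℓ : 1 ≤ ℓ) (hk : ℓ ≤ k) :
    (2 * (k : ℝ)) / (4 * (k : ℝ) + 2 * (ℓ : ℝ)) ≤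
      indRatio ({1, 2 * k, 2 * k + 2 * ℓ} : Finset ℕ) :=
  indRatio_one_even_even_ge_general k ℓ hℓ
end

section
/- Let ℓ and k be integers with 1 ≤ ℓ ≤ 3 and k ≥ ℓ. Then ᾱ({1, 2k, 2k+2ℓ}) = 2k/(4k+2ℓ). -/
open Filter

/-!
Put `p = 4k + 2ℓ`. The integers whose residue mod `p` is even and below `2k`, or odd and between
`2k` and `4k`, form an independent set of density `2k/p`. Conversely, every window of `p`
consecutive integers contains at most `2k` points of an independent set.

The window bound rests on a counting fact in a finite abelian group `G`: if `s` is disjoint from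
`g + s`, translation by `2g` moves at most `|G| - 2|s|` points of `s` out of `s`, so translation by
`(2j+1)g` moves at least `|s| - j(|G| - 2|s|)` of them out.

If `k = ℓm`, label the window by `ZMod p`: both distances `2k` and `2k + 2ℓ` become the shift
`g = 2k`, and `(2m+1)g = 0` leaves room for at most `mp/(2m+1) = 2k` points.

Otherwise `ℓ ∈ {2, 3}` is prime to `k`. Give `a + 2q` and `a + 2q + 1` the same label
`q ∈ ZMod (2k+ℓ)`. The even and odd positions become sets `X` and `Y`, each disjoint from its
shift by `k`, and the distance `1` joins them by the rungs `x ~ x` and `y ~ y + 1`. Choose a small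
`j` with `(2j+1)k = ±1`. If `|X| > k`, the shift by `1` moves many points of `X` out of `X`, and the
rungs keep those points out of `Y` as well, which forces `|X| + |Y| ≤ 2k`.
-/

open Pointwise Finset Topology

section ShiftedSets

variable {G : Type*} [AddCommGroup G] [DecidableEq G] {s t : Finset G}

lemma two_mul_card_le_of_disjoint_vadd [Fintype G] {g : G} (h : Disjoint s (g +ᵥ s)) :
    2 * #s ≤ Fintype.card G := by
  calc 2 * #s = #(s ∪ (g +ᵥ s)) := by rw [card_union_of_disjoint h, card_vadd_finset]; ring
    _ ≤ Fintype.card G := card_le_univ _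

lemma card_neg_vadd_sdiff (s : Finset G) (c : G) : #((-c +ᵥ s) \ s) = #((c +ᵥ s) \ s) := by
  calc #((-c +ᵥ s) \ s) = #(c +ᵥ ((-c +ᵥ s) \ s)) := (card_vadd_finset _ _).symm
    _ = #(s \ (c +ᵥ s)) := by rw [vadd_finset_sdiff, vadd_vadd, add_neg_cancel, zero_vadd]
    _ = #((c +ᵥ s) \ s) := card_sdiff_comm (card_vadd_finset _ _).symm

lemma card_add_vadd_sdiff_le (s : Finset G) (c d : G) :
    #(((c + d) +ᵥ s) \ s) ≤ #((c +ᵥ s) \ s) + #((d +ᵥ s) \ s) := by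
  calc #(((c + d) +ᵥ s) \ s) ≤ #((((c + d) +ᵥ s) \ (c +ᵥ s)) ∪ ((c +ᵥ s) \ s)) :=
        card_le_card (sdiff_triangle _ _ _)
    _ ≤ #(((c + d) +ᵥ s) \ (c +ᵥ s)) + #((c +ᵥ s) \ s) := card_union_le _ _
    _ = #((d +ᵥ s) \ s) + #((c +ᵥ s) \ s) := by
        rw [← vadd_vadd, ← vadd_finset_sdiff, card_vadd_finset]
    _ = _ := add_comm _ _

/-- `2 • g +ᵥ s` avoids `g +ᵥ s`, so its points outside `s` lie outside `s ∪ (g +ᵥ s)`. -/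
lemma card_two_nsmul_vadd_sdiff_le [Fintype G] {g : G} (h : Disjoint s (g +ᵥ s)) :
    #((2 • g +ᵥ s) \ s) ≤ Fintype.card G - 2 * #s := by
  have hsub : (2 • g +ᵥ s) \ s ⊆ (s ∪ (g +ᵥ s))ᶜ := by
    intro x hx
    obtain ⟨⟨y, hy, rfl⟩, hxs⟩ := by simpa only [Finset.mem_sdiff, mem_vadd_finset] using hx
    simp only [mem_compl, mem_union, not_or, mem_vadd_finset, vadd_eq_add]
    refine ⟨hxs, fun ⟨z, hz, hzy⟩ => disjoint_left.1 h hz (mem_vadd_finset.2 ⟨y, hy, ?_⟩)⟩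
    rw [two_nsmul] at hzy
    exact (add_left_cancel (hzy.trans (add_assoc g g y))).symm
  calc #((2 • g +ᵥ s) \ s) ≤ #(s ∪ (g +ᵥ s))ᶜ := card_le_card hsub
    _ = Fintype.card G - 2 * #s := by
        rw [card_compl, card_union_of_disjoint h, card_vadd_finset, two_mul]

lemma card_nsmul_two_nsmul_vadd_sdiff_le [Fintype G] {g : G} (h : Disjoint s (g +ᵥ s)) (j : ℕ) :
    #((j • 2 • g +ᵥ s) \ s) ≤ j * (Fintype.card G - 2 * #s) := by
  induction j with
  | zero => simp
  | succ j ih =>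
    calc #(((j + 1) • 2 • g +ᵥ s) \ s) ≤ #((j • 2 • g +ᵥ s) \ s) + #((2 • g +ᵥ s) \ s) := by
          rw [succ_nsmul]; exact card_add_vadd_sdiff_le _ _ _
      _ ≤ (j + 1) * (Fintype.card G - 2 * #s) := by
          rw [add_mul, one_mul]; exact add_le_add ih (card_two_nsmul_vadd_sdiff_le h)

/-- Translation by `g` moves every point of `s` out of `s`, and translation by `j • 2 • g` moves
at most `j` times the number of gaps `|G| - 2|s|`. -/
lemma card_le_card_odd_nsmul_vadd_sdiff_add [Fintype G] {g : G} (h : Disjoint s (g +ᵥ s)) (j : ℕ) :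
    #s ≤ #(((2 * j + 1) • g +ᵥ s) \ s) + j * (Fintype.card G - 2 * #s) := by
  have hg : g = -(j • 2 • g : G) + (2 * j + 1) • g := by
    rw [smul_smul, add_nsmul, one_nsmul, mul_comm]; abel
  calc #s = #((g +ᵥ s) \ s) := by rw [sdiff_eq_self_of_disjoint h.symm, card_vadd_finset]
    _ ≤ #((-(j • 2 • g : G) +ᵥ s) \ s) + #(((2 * j + 1) • g +ᵥ s) \ s) := by
        have := card_add_vadd_sdiff_le s (-(j • 2 • g)) ((2 * j + 1) • g)
        rwa [← hg] at this
    _ ≤ #(((2 * j + 1) • g +ᵥ s) \ s) + j * (Fintype.card G - 2 * #s) := by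
        rw [card_neg_vadd_sdiff, add_comm]
        exact Nat.add_le_add_left (card_nsmul_two_nsmul_vadd_sdiff_le h j) _

lemma card_add_card_add_card_vadd_sdiff_le [Fintype G] {c e : G} (hst : Disjoint s t)
    (hc : ∀ x ∈ t, x ∈ c +ᵥ s → x = e) :
    #s + #t + #((c +ᵥ s) \ s) ≤ Fintype.card G + 1 := by
  set u := (c +ᵥ s) \ s
  have htu : #(t ∩ u) ≤ 1 := card_le_one.2 fun x hx y hy => by
    rw [Finset.mem_inter, Finset.mem_sdiff] at hx hy
    rw [hc x hx.1 hx.2.1, hc y hy.1 hy.2.1]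
  have hsu : Disjoint s (t ∪ u) := disjoint_union_right.2 ⟨hst, disjoint_sdiff⟩
  calc #s + #t + #u = #s + #(t ∪ u) + #(t ∩ u) := by
        rw [add_assoc, ← card_union_add_card_inter t u, add_assoc]
    _ ≤ #(s ∪ (t ∪ u)) + 1 := by rw [card_union_of_disjoint hsu]; omega
    _ ≤ Fintype.card G + 1 := by gcongr; exact card_le_univ _

lemma mul_card_le_of_disjoint_vadd_of_nsmul_eq_zero [Fintype G] {g : G} (h : Disjoint s (g +ᵥ s))
    {m : ℕ} (hm : (2 * m + 1) • g = 0) : (2 * m + 1) * #s ≤ m * Fintype.card G := by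
  have hspread := card_le_card_odd_nsmul_vadd_sdiff_add h m
  rw [hm, zero_vadd, Finset.sdiff_self, card_empty, zero_add] at hspread
  have h2 := two_mul_card_le_of_disjoint_vadd h
  zify [h2] at hspread ⊢
  nlinarith

lemma card_add_card_le_of_rungs [Fintype G] {g c e : G} {k ℓ j : ℕ}
    (hG : Fintype.card G = 2 * k + ℓ) (hj : (2 * j + 1) • g = c ∨ (2 * j + 1) • g = -c)
    (hjk : ℓ + j * (ℓ - 2) ≤ k) (hs : Disjoint s (g +ᵥ s)) (ht : Disjoint t (g +ᵥ t))
    (hst : Disjoint s t) (hts : ∀ y ∈ t, y ∈ -c +ᵥ s → y = e) : #s + #t ≤ 2 * k := by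
  have spread : ∀ u : Finset G, Disjoint u (g +ᵥ u) →
      #u ≤ #((c +ᵥ u) \ u) + j * (2 * k + ℓ - 2 * #u) := by
    intro u hu
    have := card_le_card_odd_nsmul_vadd_sdiff_add hu j
    rcases hj with h | h
    · rwa [h, hG] at this
    · rwa [h, hG, card_neg_vadd_sdiff] at this
  have ladder_s := card_add_card_add_card_vadd_sdiff_le hst hts
  have ladder_t := card_add_card_add_card_vadd_sdiff_le (c := c) (e := c + e) hst.symm
    fun x hx hxc => by
      obtain ⟨y, hy, rfl⟩ := mem_vadd_finset.1 hxc
      rw [hts y hy (mem_vadd_finset.2 ⟨c +ᵥ y, hx, neg_vadd_vadd c y⟩), vadd_eq_add]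
  rw [card_neg_vadd_sdiff, hG] at ladder_s
  rw [hG] at ladder_t
  have hs2 := two_mul_card_le_of_disjoint_vadd hs
  have ht2 := two_mul_card_le_of_disjoint_vadd ht
  rw [hG] at hs2 ht2
  -- Only the larger set can have more than `k` points, and then it leaves at most `ℓ - 2` gaps.
  have bound : ∀ a b d : ℕ, a + b + d ≤ 2 * k + ℓ + 1 → a ≤ d + j * (2 * k + ℓ - 2 * a) →
      2 * a ≤ 2 * k + ℓ → b ≤ a → a + b ≤ 2 * k := by
    intro a b d hab had ha hba
    by_contra! hlt
    have : j * (2 * k + ℓ - 2 * a) ≤ j * (ℓ - 2) := Nat.mul_le_mul_left j (by omega)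
    omega
  rcases le_total #t #s with h | h
  · exact bound _ _ _ ladder_s (spread s hs) hs2 h
  · rw [add_comm]; exact bound _ _ _ ladder_t (spread t ht) ht2 h

end ShiftedSets

lemma eq_add_or_eq_add_sub_of_intCast_eq {N : ℕ} {u v c : ℤ} (hu : 0 ≤ u) (hu' : u < N)
    (hv : 0 ≤ v) (hv' : v < N) (hc : 0 ≤ c) (hc' : c ≤ N) (h : (u : ZMod N) = c + v) :
    u = c + v ∨ u = c + v - N := by
  obtain ⟨t, ht⟩ : (N : ℤ) ∣ u - (c + v) :=
    (ZMod.intCast_zmod_eq_zero_iff_dvd _ N).1 (by push_cast; rw [h, sub_self])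
  have : -2 < t := by nlinarith
  have : t < 1 := by nlinarith
  obtain rfl | rfl : t = -1 ∨ t = 0 := by omega
  · right; linarith
  · left; linarith

lemma IsIndepSet.sub_ne_s16 {S : Finset ℕ} {A : Set ℤ} (hA : IsIndepSet S A) {x y : ℤ} (hx : x ∈ A)
    (hy : y ∈ A) {d : ℕ} (hd : d ∈ S) (hd0 : 0 < d) : x - y ≠ d := fun h =>
  hA x hx y hy (by omega) (by rwa [h, Int.natAbs_natCast])

lemma ncard_inter_Ico_eq_card_filter (A : Set ℤ) [DecidablePred (· ∈ A)] (a b : ℤ) :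
    (A ∩ Set.Ico a b).ncard = #((Ico a b).filter (· ∈ A)) := by
  rw [← Set.ncard_coe_finset]
  congr 1
  ext x
  simp [and_comm]

lemma IsIndepSet.ncard_inter_Ico_le_of_mul_mem {S : Finset ℕ} {A : Set ℤ} (hA : IsIndepSet S A)
    {D m : ℕ} (hD : 0 < D) (hm : 0 < m) (hDm : D * m ∈ S) (hDm1 : D * (m + 1) ∈ S) (a : ℤ) :
    (A ∩ Set.Ico a (a + ((D * (2 * m + 1) : ℕ) : ℤ))).ncard ≤ D * m := by
  classical
  set N := D * (2 * m + 1)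
  have : NeZero N := ⟨by positivity⟩
  set F := (Ico a (a + N)).filter (· ∈ A)
  have hF : ∀ x ∈ F, x ∈ A ∧ 0 ≤ x - a ∧ x - a < N := fun x hx => by
    simp only [F, mem_filter, mem_Ico] at hx; exact ⟨hx.2, by omega, by omega⟩
  let label : ℤ → ZMod N := fun x => ((x - a : ℤ) : ZMod N)
  have key : ∀ x ∈ F, ∀ y ∈ F, ∀ c : ℕ, c < N → label x = c + label y →
      x - a = c + (y - a) ∨ x - a = c + (y - a) - N := fun x hx y hy c hc h => by
    obtain ⟨-, hx0, hx1⟩ := hF x hx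
    obtain ⟨-, hy0, hy1⟩ := hF y hy
    exact eq_add_or_eq_add_sub_of_intCast_eq hx0 hx1 hy0 hy1 (by omega) (by omega)
      (by simpa [label] using h)
  have hinj : Set.InjOn label F := fun x hx y hy h => by
    have := key x hx y hy 0 (by positivity) (by simpa using h)
    obtain ⟨-, hx0, -⟩ := hF x hx
    obtain ⟨-, -, hy1⟩ := hF y hy
    omega
  have hcycle : Disjoint (F.image label) (((D * m : ℕ) : ZMod N) +ᵥ F.image label) := by
    rw [disjoint_left]
    simp only [mem_vadd_finset, mem_image, vadd_eq_add]
    rintro _ ⟨x, hx, rfl⟩ ⟨_, ⟨y, hy, rfl⟩, hxy⟩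
    have hN : (N : ℤ) = D * m + D * (m + 1) := by push_cast [N]; ring
    rcases key x hx y hy (D * m) (by simp only [N]; nlinarith) hxy.symm with h | h
    · exact hA.sub_ne_s16 (hF x hx).1 (hF y hy).1 hDm (by positivity) (by push_cast at h ⊢; linarith)
    · exact hA.sub_ne_s16 (hF y hy).1 (hF x hx).1 hDm1 (by positivity)
        (by push_cast at h hN ⊢; linarith)
  have hzero : (2 * m + 1) • ((D * m : ℕ) : ZMod N) = 0 := by
    have : (2 * m + 1) • ((D * m : ℕ) : ZMod N) = ((m * N : ℕ) : ZMod N) := by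
      simp only [nsmul_eq_mul]; push_cast [N]; ring
    rw [this, Nat.cast_mul, ZMod.natCast_self, mul_zero]
  have hodd := mul_card_le_of_disjoint_vadd_of_nsmul_eq_zero hcycle hzero
  rw [ZMod.card, mul_comm m N, mul_right_comm, mul_comm] at hodd
  rw [ncard_inter_Ico_eq_card_filter, ← card_image_of_injOn hinj]
  exact Nat.le_of_mul_le_mul_right hodd (by omega)

section HalfLabels

variable {S : Finset ℕ} {A : Set ℤ} {F : Finset ℤ} {a : ℤ} {n k ℓ : ℕ}

def halfLabel (a : ℤ) (n : ℕ) (x : ℤ) : ZMod n := (((x - a) / 2 : ℤ) : ZMod n)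

def parityLabels (F : Finset ℤ) (a : ℤ) (n : ℕ) (r : ℤ) : Finset (ZMod n) :=
  (F.filter fun x => (x - a) % 2 = r).image (halfLabel a n)

lemma halfLabel_eq_add {x y : ℤ} (hx : x ∈ Set.Ico a (a + 2 * n)) (hy : y ∈ Set.Ico a (a + 2 * n))
    {c : ℕ} (hc : c ≤ n) (h : halfLabel a n x = c + halfLabel a n y) :
    (x - a) / 2 = c + (y - a) / 2 ∨ (x - a) / 2 = c + (y - a) / 2 - n := by
  obtain ⟨hx0, hx1⟩ := hx
  obtain ⟨hy0, hy1⟩ := hy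
  exact eq_add_or_eq_add_sub_of_intCast_eq (by omega) (by omega) (by omega) (by omega)
    (by omega) (by omega) (by simpa [halfLabel] using h)

lemma card_parityLabels_zero_add_card_parityLabels_one
    (hF : ∀ x ∈ F, x ∈ Set.Ico a (a + 2 * n)) :
    #(parityLabels F a n 0) + #(parityLabels F a n 1) = #F := by
  have hinj : ∀ r, Set.InjOn (halfLabel a n) (F.filter fun x => (x - a) % 2 = r) :=
    fun r x hx y hy h => by
      simp only [coe_filter, Set.mem_ofPred_eq] at hx hy
      have := halfLabel_eq_add (hF x hx.1) (hF y hy.1) (Nat.zero_le n) (by simpa using h)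
      obtain ⟨hxa, hxa'⟩ := hF x hx.1
      obtain ⟨hya, hya'⟩ := hF y hy.1
      omega
  rw [parityLabels, parityLabels, card_image_of_injOn (hinj 0), card_image_of_injOn (hinj 1),
    ← card_filter_add_card_filter_not (s := F) (fun x => (x - a) % 2 = 0)]
  congr 2
  exact filter_congr fun x _ => by omega

lemma IsIndepSet.disjoint_parityLabels_vadd (hA : IsIndepSet S A)
    (hF : ∀ x ∈ F, x ∈ A ∩ Set.Ico a (a + 2 * n)) (hn : n = 2 * k + ℓ) (hk : 0 < k)
    (h2k : 2 * k ∈ S) (h2kl : 2 * k + 2 * ℓ ∈ S) (r : ℤ) :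
    Disjoint (parityLabels F a n r) ((k : ZMod n) +ᵥ parityLabels F a n r) := by
  rw [disjoint_left]
  simp only [parityLabels, mem_vadd_finset, mem_image, mem_filter, vadd_eq_add]
  rintro _ ⟨x, ⟨hx, hxr⟩, rfl⟩ ⟨_, ⟨y, ⟨hy, hyr⟩, rfl⟩, hxy⟩
  rcases halfLabel_eq_add (hF x hx).2 (hF y hy).2 (by omega) hxy.symm with h | h
  · exact hA.sub_ne_s16 (hF x hx).1 (hF y hy).1 h2k (by omega) (by push_cast; omega)
  · exact hA.sub_ne_s16 (hF y hy).1 (hF x hx).1 h2kl (by omega) (by push_cast; omega)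

lemma IsIndepSet.disjoint_parityLabels_zero_one (hA : IsIndepSet S A)
    (hF : ∀ x ∈ F, x ∈ A ∩ Set.Ico a (a + 2 * n)) (h1 : 1 ∈ S) :
    Disjoint (parityLabels F a n 0) (parityLabels F a n 1) := by
  rw [disjoint_left]
  simp only [parityLabels, mem_image, mem_filter]
  rintro _ ⟨x, ⟨hx, hxe⟩, rfl⟩ ⟨y, ⟨hy, hyo⟩, hxy⟩
  have := halfLabel_eq_add (hF y hy).2 (hF x hx).2 (Nat.zero_le n) (by simpa using hxy)
  obtain ⟨hxa, hxa'⟩ := (hF x hx).2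
  obtain ⟨hya, hya'⟩ := (hF y hy).2
  exact hA.sub_ne_s16 (hF y hy).1 (hF x hx).1 h1 one_pos (by push_cast; omega)

/-- The only rung leaving the window: the last odd position `a + 2n - 1` has label `-1`. -/
lemma IsIndepSet.eq_neg_one_of_mem_parityLabels (hA : IsIndepSet S A)
    (hF : ∀ x ∈ F, x ∈ A ∩ Set.Ico a (a + 2 * n)) (h1 : 1 ∈ S) :
    ∀ y ∈ parityLabels F a n 1, y ∈ (-1 : ZMod n) +ᵥ parityLabels F a n 0 → y = -1 := by
  simp only [parityLabels, mem_vadd_finset, mem_image, mem_filter, vadd_eq_add]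
  rintro _ ⟨y, ⟨hy, hyo⟩, rfl⟩ ⟨_, ⟨x, ⟨hx, hxe⟩, rfl⟩, hxy⟩
  obtain ⟨hxa, hxa'⟩ := (hF x hx).2
  obtain ⟨hya, hya'⟩ := (hF y hy).2
  rcases halfLabel_eq_add (hF x hx).2 (hF y hy).2 (c := 1) (by omega)
    (by rw [← hxy]; push_cast; ring) with h | h
  · exact absurd (by omega) (hA.sub_ne_s16 (hF x hx).1 (hF y hy).1 h1 one_pos)
  · have hq : (y - a) / 2 = (n : ℤ) - 1 := by omega
    simp only [halfLabel, hq, Int.cast_sub, Int.cast_natCast, Int.cast_one, ZMod.natCast_self,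
      zero_sub]

end HalfLabels

lemma IsIndepSet.ncard_inter_Ico_le_of_rungs {S : Finset ℕ} {A : Set ℤ} (hA : IsIndepSet S A)
    {n k ℓ j : ℕ} [NeZero n] (hn : n = 2 * k + ℓ)
    (hj : (2 * j + 1) • (k : ZMod n) = 1 ∨ (2 * j + 1) • (k : ZMod n) = -1)
    (hjk : ℓ + j * (ℓ - 2) ≤ k) (h1 : 1 ∈ S) (h2k : 2 * k ∈ S) (h2kl : 2 * k + 2 * ℓ ∈ S)
    (a : ℤ) : (A ∩ Set.Ico a (a + 2 * n)).ncard ≤ 2 * k := by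
  classical
  have hk : 0 < k := by have := NeZero.ne n; omega
  set F := (Ico a (a + 2 * n)).filter (· ∈ A)
  have hF : ∀ x ∈ F, x ∈ A ∩ Set.Ico a (a + 2 * n) := fun x hx => by
    simpa [F, and_comm] using hx
  rw [ncard_inter_Ico_eq_card_filter, ← card_parityLabels_zero_add_card_parityLabels_one
    fun x hx => (hF x hx).2]
  exact card_add_card_le_of_rungs (by rw [ZMod.card, hn]) hj hjk
    (hA.disjoint_parityLabels_vadd hF hn hk h2k h2kl 0)
    (hA.disjoint_parityLabels_vadd hF hn hk h2k h2kl 1)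
    (hA.disjoint_parityLabels_zero_one hF h1) (hA.eq_neg_one_of_mem_parityLabels hF h1)

lemma tendsto_add_div_two_mul_add_one (v C : ℝ) :
    Tendsto (fun N : ℕ => v + C / (2 * (N : ℝ) + 1)) atTop (𝓝 v) := by
  have h : Tendsto (fun N : ℕ => 2 * (N : ℝ) + 1) atTop atTop :=
    tendsto_atTop_add_const_right _ _ (tendsto_natCast_atTop_atTop.const_mul_atTop two_pos)
  simpa using tendsto_const_nhds.add (tendsto_const_nhds.div_atTop h)

lemma density_le_of_ncard_le {A : Set ℤ} {v C : ℝ}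
    (h : ∀ N : ℕ, ((A ∩ Set.Icc (-(N : ℤ)) N).ncard : ℝ) ≤ (2 * N + 1) * v + C) :
    density A ≤ v := by
  have hg := tendsto_add_div_two_mul_add_one v C
  refine (limsup_le_limsup (Eventually.of_forall fun N => ?_)
    (isCoboundedUnder_le_of_le atTop fun N => by positivity) hg.isBoundedUnder_le).trans
    hg.limsup_eq.le
  rw [div_le_iff₀ (by positivity), add_mul, div_mul_cancel₀ _ (by positivity)]
  linarith [h N]

lemma le_density_of_le_ncard {A : Set ℤ} {v C : ℝ}
    (h : ∀ N : ℕ, (2 * N + 1) * v - C ≤ ((A ∩ Set.Icc (-(N : ℤ)) N).ncard : ℝ)) :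
    v ≤ density A := by
  have hg := tendsto_add_div_two_mul_add_one v (-C)
  have hle_one : ∀ N : ℕ, ((A ∩ Set.Icc (-(N : ℤ)) N).ncard : ℝ) / (2 * N + 1) ≤ 1 := by
    intro N
    rw [div_le_one (by positivity)]
    have : (A ∩ Set.Icc (-(N : ℤ)) N).ncard ≤ 2 * N + 1 :=
      (Set.ncard_le_ncard Set.inter_subset_right (Set.finite_Icc _ _)).trans
        (by rw [← coe_Icc, Set.ncard_coe_finset, Int.card_Icc]; omega)
    exact_mod_cast this
  refine hg.limsup_eq.ge.trans (limsup_le_limsup (Eventually.of_forall fun N => ?_)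
    hg.isCoboundedUnder_le (isBoundedUnder_of ⟨1, hle_one⟩))
  rw [le_div_iff₀ (by positivity), add_mul, div_mul_cancel₀ _ (by positivity)]
  linarith [h N]

section WindowCounting

variable {A : Set ℤ} {p c : ℕ}

lemma inter_Ico_succ_mul (A : Set ℤ) (a : ℤ) (p q : ℕ) :
    A ∩ Set.Ico a (a + (q + 1 : ℕ) * p) =
      A ∩ Set.Ico a (a + q * p) ∪ A ∩ Set.Ico (a + q * p) (a + q * p + p) := by
  rw [← Set.inter_union_distrib_left, Set.Ico_union_Ico_eq_Ico
    (le_add_of_nonneg_right (by positivity)) (le_add_of_nonneg_right (by positivity))]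
  push_cast
  ring_nf

lemma ncard_inter_Ico_mul_le (hwin : ∀ a : ℤ, (A ∩ Set.Ico a (a + p)).ncard ≤ c) (a : ℤ)
    (q : ℕ) : (A ∩ Set.Ico a (a + q * p)).ncard ≤ q * c := by
  induction q with
  | zero => simp
  | succ q ih =>
    rw [inter_Ico_succ_mul, add_one_mul]
    exact (Set.ncard_union_le _ _).trans (add_le_add ih (hwin _))

lemma mul_le_ncard_inter_Ico_mul (hwin : ∀ a : ℤ, c ≤ (A ∩ Set.Ico a (a + p)).ncard) (a : ℤ)
    (q : ℕ) : q * c ≤ (A ∩ Set.Ico a (a + q * p)).ncard := by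
  induction q with
  | zero => simp
  | succ q ih =>
    rw [inter_Ico_succ_mul, add_one_mul, Set.ncard_union_eq
      (Set.Ico_disjoint_Ico_same.mono Set.inter_subset_right Set.inter_subset_right)
      ((Set.finite_Ico _ _).subset Set.inter_subset_right)
      ((Set.finite_Ico _ _).subset Set.inter_subset_right)]
    exact add_le_add ih (hwin _)

lemma density_le_of_forall_ncard_inter_Ico_le (hp : 0 < p)
    (hwin : ∀ a : ℤ, (A ∩ Set.Ico a (a + p)).ncard ≤ c) : density A ≤ c / p := by
  refine density_le_of_ncard_le (C := c) fun N => ?_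
  set q := (2 * N + 1) / p + 1
  have hq : 2 * N + 1 < q * p := by
    simpa [q, add_one_mul] using Nat.lt_div_mul_add (a := 2 * N + 1) hp
  have hq' : q * p ≤ 2 * N + 1 + p := by
    simpa [q, add_one_mul] using Nat.div_mul_le_self (2 * N + 1) p
  have hcover : A ∩ Set.Icc (-(N : ℤ)) N ⊆ A ∩ Set.Ico (-N) (-N + q * p) :=
    Set.inter_subset_inter_right _ (Set.Icc_subset_Ico_right (by omega))
  have hcount := (Set.ncard_le_ncard hcover
    ((Set.finite_Ico _ _).subset Set.inter_subset_right)).trans (ncard_inter_Ico_mul_le hwin _ q)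
  have hp' : (0 : ℝ) < p := by exact_mod_cast hp
  calc ((A ∩ Set.Icc (-(N : ℤ)) N).ncard : ℝ) ≤ q * c := by exact_mod_cast hcount
    _ = ((q * p : ℕ) : ℝ) * (c / p) := by push_cast; field_simp
    _ ≤ ((2 * N + 1 + p : ℕ) : ℝ) * (c / p) := by gcongr
    _ = (2 * N + 1) * (c / p) + c := by push_cast; field_simp

lemma le_density_of_forall_le_ncard_inter_Ico (hp : 0 < p)
    (hwin : ∀ a : ℤ, c ≤ (A ∩ Set.Ico a (a + p)).ncard) : (c / p : ℝ) ≤ density A := by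
  refine le_density_of_le_ncard (C := c) fun N => ?_
  set q := (2 * N + 1) / p
  have hq : q * p ≤ 2 * N + 1 := Nat.div_mul_le_self _ _
  have hq' : 2 * N + 1 < q * p + p := Nat.lt_div_mul_add hp
  have hqZ : (q : ℤ) * p ≤ 2 * N + 1 := by exact_mod_cast hq
  have hcover : A ∩ Set.Ico (-N) (-N + q * p) ⊆ A ∩ Set.Icc (-(N : ℤ)) N :=
    Set.inter_subset_inter_right _ fun x hx => ⟨hx.1, by linarith [hx.2]⟩
  have hcount := (mul_le_ncard_inter_Ico_mul hwin _ q).trans (Set.ncard_le_ncard hcover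
    ((Set.finite_Icc _ _).subset Set.inter_subset_right))
  have hp' : (0 : ℝ) < p := by exact_mod_cast hp
  calc (2 * N + 1) * (c / p) - c = ((2 * N + 1 : ℕ) : ℝ) * (c / p) - p * (c / p) := by
        push_cast; field_simp
    _ ≤ ((q * p : ℕ) : ℝ) * (c / p) := by
        have : ((2 * N + 1 : ℕ) : ℝ) ≤ q * p + p := by exact_mod_cast hq'.le
        rw [← sub_mul]; gcongr; push_cast at this ⊢; linarith
    _ = ((q * c : ℕ) : ℝ) := by push_cast; field_simp
    _ ≤ ((A ∩ Set.Icc (-(N : ℤ)) N).ncard : ℝ) := by exact_mod_cast hcount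


end WindowCounting

lemma card_le_ncard_inter_Ico_of_emod_mem {p : ℕ} (hp : 0 < p) {R : Finset ℤ}
    (hR : ∀ r ∈ R, 0 ≤ r ∧ r < p) (a : ℤ) :
    #R ≤ ({x : ℤ | x % p ∈ R} ∩ Set.Ico a (a + p)).ncard := by
  have hp' : (0 : ℤ) < p := by exact_mod_cast hp
  have hrep : ∀ r ∈ R, (a + (r - a) % p) % p = r := fun r hr => by
    rw [Int.add_emod_emod, add_sub_cancel, Int.emod_eq_of_lt (hR r hr).1 (hR r hr).2]
  rw [← Set.ncard_coe_finset]
  refine Set.ncard_le_ncard_of_injOn (fun r => a + (r - a) % p) (fun r hr => ⟨?_, ?_, ?_⟩)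
    (fun r hr r' hr' h => ?_) ((Set.finite_Ico _ _).subset Set.inter_subset_right)
  · simpa [hrep r hr] using hr
  · linarith [Int.emod_nonneg (r - a) hp'.ne']
  · linarith [Int.emod_lt_of_pos (r - a) hp']
  · rw [← hrep r hr, ← hrep r' hr']
    exact congrArg (· % (p : ℤ)) h

def extremalResidues (k : ℕ) : Finset ℤ :=
  (range (2 * k)).image fun i : ℕ => (2 * i + if i < k then 0 else 1 : ℤ)

lemma card_extremalResidues (k : ℕ) : #(extremalResidues k) = 2 * k := by
  rw [extremalResidues, card_image_of_injOn, card_range]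
  intro i _ i' _ h
  simp only at h
  split_ifs at h <;> omega

lemma mem_extremalResidues {k : ℕ} {r : ℤ} :
    r ∈ extremalResidues k ↔
      (0 ≤ r ∧ r < 2 * k ∧ r % 2 = 0) ∨ (2 * k < r ∧ r < 4 * k ∧ r % 2 = 1) := by
  simp only [extremalResidues, mem_image, mem_range]
  constructor
  · rintro ⟨i, hi, rfl⟩
    split_ifs <;> omega
  · rintro (⟨h0, h1, h2⟩ | ⟨h0, h1, h2⟩)
    · exact ⟨(r / 2).toNat, by omega, by rw [if_pos (by omega)]; omega⟩
    · exact ⟨(r / 2).toNat, by omega, by rw [if_neg (by omega)]; omega⟩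

lemma isIndepSet_setOf_emod_mem_extremalResidues {k ℓ : ℕ} (hℓ : 1 ≤ ℓ) :
    IsIndepSet {1, 2 * k, 2 * k + 2 * ℓ}
      {x : ℤ | x % (4 * k + 2 * ℓ : ℕ) ∈ extremalResidues k} := by
  intro x hx y hy hxy hS
  set p : ℤ := ((4 * k + 2 * ℓ : ℕ) : ℤ)
  have hp : 0 < p := by omega
  simp only [Set.mem_ofPred_eq, mem_extremalResidues] at hx hy
  simp only [Finset.mem_insert, Finset.mem_singleton] at hS
  obtain ⟨t, ht⟩ : ∃ t : ℤ, x - y = x % p - y % p + p * t :=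
    ⟨x / p - y / p, by
      rw [mul_sub]; linarith [Int.emod_add_mul_ediv x p, Int.emod_add_mul_ediv y p]⟩
  have h1 : p * t < p * 2 := by omega
  have h2 : p * (-2) < p * t := by omega
  have := lt_of_mul_lt_mul_left h1 hp.le
  have := lt_of_mul_lt_mul_left h2 hp.le
  obtain rfl | rfl | rfl : t = -1 ∨ t = 0 ∨ t = 1 := by omega
  all_goals simp only [mul_neg, mul_one, mul_zero] at ht; omega

lemma nsmul_natCast_eq_one {n a b q : ℕ} (h : a * b = q * n + 1) : a • (b : ZMod n) = 1 := by
  rw [nsmul_eq_mul, ← Nat.cast_mul, h]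
  simp

lemma nsmul_natCast_eq_neg_one {n a b q : ℕ} (h : a * b + 1 = q * n) :
    a • (b : ZMod n) = -1 := by
  rw [eq_neg_iff_add_eq_zero, nsmul_eq_mul, ← Nat.cast_mul, ← Nat.cast_add_one, h]
  simp

lemma IsIndepSet.ncard_inter_Ico_le_two_mul {k ℓ : ℕ} {A : Set ℤ}
    (hA : IsIndepSet {1, 2 * k, 2 * k + 2 * ℓ} A) (hℓ1 : 1 ≤ ℓ) (hℓ3 : ℓ ≤ 3) (hk : ℓ ≤ k)
    (a : ℤ) :
    (A ∩ Set.Ico a (a + ((4 * k + 2 * ℓ : ℕ) : ℤ))).ncard ≤ 2 * k := by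
  have h1 : 1 ∈ ({1, 2 * k, 2 * k + 2 * ℓ} : Finset ℕ) := by simp
  have h2k : 2 * k ∈ ({1, 2 * k, 2 * k + 2 * ℓ} : Finset ℕ) := by simp
  have h2kl : 2 * k + 2 * ℓ ∈ ({1, 2 * k, 2 * k + 2 * ℓ} : Finset ℕ) := by simp
  by_cases hdvd : ℓ ∣ k
  · obtain ⟨m, rfl⟩ := hdvd
    have hm : 0 < m := Nat.pos_of_ne_zero fun h => by simp [h] at hk; omega
    have := hA.ncard_inter_Ico_le_of_mul_mem (D := 2 * ℓ) (by omega) hm (by rwa [mul_assoc])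
      (by rwa [mul_add, mul_one, mul_assoc]) a
    rwa [show 4 * (ℓ * m) + 2 * ℓ = 2 * ℓ * (2 * m + 1) by ring,
      show 2 * (ℓ * m) = 2 * ℓ * m by ring]
  have : NeZero (2 * k + ℓ) := ⟨by omega⟩
  have rungs : ∀ j, (2 * j + 1) • (k : ZMod (2 * k + ℓ)) = 1 ∨
      (2 * j + 1) • (k : ZMod (2 * k + ℓ)) = -1 → ℓ + j * (ℓ - 2) ≤ k →
      (A ∩ Set.Ico a (a + ((4 * k + 2 * ℓ : ℕ) : ℤ))).ncard ≤ 2 * k := fun j hj hjk => by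
    have := hA.ncard_inter_Ico_le_of_rungs rfl hj hjk h1 h2k h2kl a
    rwa [show (2 * ((2 * k + ℓ : ℕ) : ℤ)) = ((4 * k + 2 * ℓ : ℕ) : ℤ) by push_cast; ring] at this
  interval_cases ℓ
  · exact absurd (one_dvd k) hdvd
  · obtain ⟨t, rfl⟩ : ∃ t, k = 2 * t + 1 := ⟨k / 2, by omega⟩
    exact rungs t (Or.inl (nsmul_natCast_eq_one (q := t) (by ring))) (by omega)
  · obtain ⟨t, rfl | rfl⟩ : ∃ t, k = 3 * t + 1 ∨ k = 3 * t + 2 := ⟨k / 3, by omega⟩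
    · exact rungs t (Or.inl (nsmul_natCast_eq_one (q := t) (by ring))) (by omega)
    · exact rungs (t + 1) (Or.inr (nsmul_natCast_eq_neg_one (q := t + 1) (by ring))) (by omega)

lemma IsIndepSet.density_le {k ℓ : ℕ} {A : Set ℤ} (hA : IsIndepSet {1, 2 * k, 2 * k + 2 * ℓ} A)
    (hℓ1 : 1 ≤ ℓ) (hℓ3 : ℓ ≤ 3) (hk : ℓ ≤ k) :
    density A ≤ 2 * (k : ℝ) / (4 * (k : ℝ) + 2 * (ℓ : ℝ)) := by
  have := density_le_of_forall_ncard_inter_Ico_le (by omega)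
    (hA.ncard_inter_Ico_le_two_mul hℓ1 hℓ3 hk)
  push_cast at this
  exact this

lemma exists_isIndepSet_le_density (k : ℕ) {ℓ : ℕ} (hℓ : 1 ≤ ℓ) :
    ∃ P : Set ℤ, IsIndepSet {1, 2 * k, 2 * k + 2 * ℓ} P ∧
      2 * (k : ℝ) / (4 * (k : ℝ) + 2 * (ℓ : ℝ)) ≤ density P := by
  refine ⟨_, isIndepSet_setOf_emod_mem_extremalResidues hℓ, ?_⟩
  have := le_density_of_forall_le_ncard_inter_Ico (p := 4 * k + 2 * ℓ) (by omega) fun a =>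
    (card_extremalResidues k).ge.trans (card_le_ncard_inter_Ico_of_emod_mem (by omega)
      (fun r hr => by rw [mem_extremalResidues] at hr; omega) a)
  push_cast at this
  exact this

/-- For `1 ≤ ℓ ≤ 3` and `k ≥ ℓ`, `ᾱ({1, 2k, 2k+2ℓ}) = 2k/(4k+2ℓ)`. -/
theorem indRatio_one_even_even_small (ℓ k : ℕ) (hℓ1 : 1 ≤ ℓ) (hℓ3 : ℓ ≤ 3) (hk : ℓ ≤ k) :
    indRatio ({1, 2 * k, 2 * k + 2 * ℓ} : Finset ℕ) =
      (2 * (k : ℝ)) / (4 * (k : ℝ) + 2 * (ℓ : ℝ)) := by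
  have hupper : ∀ d ∈ density '' {A | IsIndepSet {1, 2 * k, 2 * k + 2 * ℓ} A},
      d ≤ 2 * (k : ℝ) / (4 * (k : ℝ) + 2 * (ℓ : ℝ)) := by
    rintro _ ⟨A, hA, rfl⟩
    exact hA.density_le hℓ1 hℓ3 hk
  obtain ⟨P, hP, hPd⟩ := exists_isIndepSet_le_density k hℓ1
  exact le_antisymm (csSup_le ⟨_, P, hP, rfl⟩ hupper)
    (hPd.trans (le_csSup ⟨_, hupper⟩ ⟨P, hP, rfl⟩))
end
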